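/- Softmax PG upper bound with exact gradients: define θ_{t+1} := θ_t + (2/5)·d(π_{θ_t}ᵀ r)/dθ_t for all t ≥ 1 from an arbitrary θ_1 ∈ ℝ^K, and let c := inf_{t ≥ 1} π_{θ_t}(a*). If c > 0, then for all t ≥ 1, (π* − π_{θ_t})ᵀ r ≤ 5/(c²·t). Moreover, if the initialization is uniform, i.e. π_{θ_1}(a) = 1/K for all a, then π_{θ_t}(a*) is non-decreasing in t and c ≥ 1/K, so (π* − π_{θ_t})ᵀ r ≤ 5K²/t for all t ≥ 1. -/

import Mathlib

open Finset Real Filter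

/-- Softmax policy: `π_θ(a) = exp(θ(a)) / Σ_{a'} exp(θ(a'))`. -/
noncomputable def softmax {K : ℕ} (θ : Fin K → ℝ) (a : Fin K) : ℝ :=
  Real.exp (θ a) / ∑ a', Real.exp (θ a')

/-- Expected reward `π_θᵀ r`. -/
noncomputable def expReward {K : ℕ} (r θ : Fin K → ℝ) : ℝ :=
  ∑ a, softmax θ a * r a

/-- Policy gradient component `(d π_θᵀ r / dθ)(a) = π_θ(a)·(r(a) − π_θᵀ r)`. -/
noncomputable def pgrad {K : ℕ} (r θ : Fin K → ℝ) (a : Fin K) : ℝ :=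
  softmax θ a * (r a - expReward r θ)

/-!
Along a line `θ + s • d` the second derivative of `s ↦ π_{θ + s d}ᵀ r` is the expectation of
`(d - E d)² (r - E r)`, which for `r ∈ [0, 1]` is at most `‖d‖²` in absolute value. So the expected
reward is `1`-smooth, and a gradient step of size `2/5` gains at least `‖∇‖² / 5`. Since the
`a*`-coordinate of the gradient is `π(a*)` times the sub-optimality gap `δ`, this gives
`δ_{t+1} ≤ δ_t - c² δ_t² / 5`, which forces `δ_t ≤ 5 / (c² (t + 1))`.
Under uniform initialization `a*` keeps the largest logit: its gradient coordinate is then the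
largest, so every logit difference `θ(a) - θ(a*)` decreases and `π_{θ_t}(a*)` increases from `1/K`.

Throughout, `expReward h θ` serves as the `π_θ`-expectation of an arbitrary `h : Fin K → ℝ`.
-/

lemma add_deriv_sub_half_le_of_neg_le_deriv2 {f f' f'' : ℝ → ℝ} {M : ℝ}
    (hf : ∀ s, HasDerivAt f (f' s) s) (hf' : ∀ s, HasDerivAt f' (f'' s) s)
    (hM : ∀ s, -M ≤ f'' s) : f 0 + f' 0 - M / 2 ≤ f 1 := by
  have hsq (s : ℝ) : HasDerivAt (fun s => M * s ^ 2 / 2) (M * s) s := by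
    refine (((hasDerivAt_pow 2 s).const_mul M).div_const 2).congr_deriv ?_
    norm_num [mul_div_assoc]
  have hconv : ConvexOn ℝ Set.univ (fun s => f s + M * s ^ 2 / 2) := by
    refine convexOn_of_hasDerivWithinAt2_nonneg convex_univ
      (f' := fun s => f' s + M * s) (f'' := fun s => f'' s + M)
      (fun s _ => (hf s).continuousAt.continuousWithinAt.add (by fun_prop)) ?_ ?_ ?_
    · intro s _
      exact ((hf s).add (hsq s)).hasDerivWithinAt
    · intro s _
      exact ((hf' s).add ((hasDerivAt_id s).const_mul M)).hasDerivWithinAt |>.congr_deriv (by simp)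
    · intro s _
      linarith [hM s]
  have := hconv.le_slope_of_hasDerivAt (Set.mem_univ 0) (Set.mem_univ 1) zero_lt_one
    ((hf 0).add (hsq 0))
  simp only [slope_def_field, mul_zero, add_zero, sub_zero, div_one, one_pow, mul_one, ne_eq,
    OfNat.ofNat_ne_zero, not_false_eq_true, zero_pow, zero_div] at this
  linarith

lemma le_div_succ_of_le_sub_sq_div {x : ℕ → ℝ} {C : ℝ} (hC : 0 < C) (h0 : x 0 ≤ C)
    (hstep : ∀ t, x (t + 1) ≤ x t - x t ^ 2 / C) (t : ℕ) : x t ≤ C / (t + 1) := by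
  induction t with
  | zero => simpa using h0
  | succ t ih =>
    rw [le_div_iff₀ (by positivity)] at ih ⊢
    push_cast
    have hxC : x t ≤ C := by nlinarith
    have hquad : (x t - x t ^ 2 / C) * (t + 1 + 1) =
        C - (C - (t + 1) * x t) * (C - x t) / C - x t ^ 2 / C := by
      field_simp
      ring
    have h1 : 0 ≤ (C - (t + 1) * x t) * (C - x t) / C := by
      apply div_nonneg (mul_nonneg _ _) hC.le <;> linarith
    have h2 : 0 ≤ x t ^ 2 / C := div_nonneg (sq_nonneg _) hC.le
    linarith [mul_le_mul_of_nonneg_right (hstep t) (by positivity : (0 : ℝ) ≤ t + 1 + 1)]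

section

variable {K : ℕ}

lemma softmax_eq_inv_sum_exp_sub (θ : Fin K → ℝ) (b : Fin K) :
    softmax θ b = (∑ a, exp (θ a - θ b))⁻¹ := by
  simp only [exp_sub, ← sum_div, softmax, inv_div]

lemma sum_pgrad_mul (r θ d : Fin K → ℝ) :
    ∑ a, pgrad r θ a * d a = expReward (d * r) θ - expReward d θ * expReward r θ := by
  unfold pgrad
  generalize expReward r θ = e
  simp only [expReward, Pi.mul_apply, sum_mul, ← sum_sub_distrib]
  exact sum_congr rfl fun a _ => by ring

variable [NeZero K]

lemma sum_exp_pos (θ : Fin K → ℝ) : 0 < ∑ a, exp (θ a) :=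
  sum_pos (fun _ _ => exp_pos _) univ_nonempty

lemma softmax_pos (θ : Fin K → ℝ) (a : Fin K) : 0 < softmax θ a :=
  div_pos (exp_pos _) (sum_exp_pos θ)

lemma sum_softmax (θ : Fin K → ℝ) : ∑ a, softmax θ a = 1 := by
  simp only [softmax, ← sum_div]
  exact div_self (sum_exp_pos θ).ne'

lemma softmax_le_one (θ : Fin K → ℝ) (a : Fin K) : softmax θ a ≤ 1 :=
  sum_softmax θ ▸ single_le_sum (fun b _ => (softmax_pos θ b).le) (mem_univ a)

lemma softmax_le_softmax_iff {θ : Fin K → ℝ} {a b : Fin K} :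
    softmax θ a ≤ softmax θ b ↔ θ a ≤ θ b := by
  rw [softmax, softmax, div_le_div_iff_of_pos_right (sum_exp_pos θ), exp_le_exp]

lemma softmax_le_softmax_of_sub_le {θ θ' : Fin K → ℝ} {b : Fin K}
    (h : ∀ a, θ' a - θ' b ≤ θ a - θ b) : softmax θ b ≤ softmax θ' b := by
  rw [softmax_eq_inv_sum_exp_sub, softmax_eq_inv_sum_exp_sub]
  exact inv_anti₀ (sum_pos (fun _ _ => exp_pos _) univ_nonempty)
    (sum_le_sum fun a _ => exp_le_exp.2 (h a))

lemma expReward_mono {h h' : Fin K → ℝ} (θ : Fin K → ℝ) (hh : ∀ a, h a ≤ h' a) :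
    expReward h θ ≤ expReward h' θ :=
  sum_le_sum fun a _ => mul_le_mul_of_nonneg_left (hh a) (softmax_pos θ a).le

lemma expReward_const (c : ℝ) (θ : Fin K → ℝ) : expReward (fun _ => c) θ = c := by
  rw [expReward, ← sum_mul, sum_softmax, one_mul]

lemma expReward_mem_Icc {r : Fin K → ℝ} (hr : ∀ a, r a ∈ Set.Icc 0 1) (θ : Fin K → ℝ) :
    expReward r θ ∈ Set.Icc 0 1 := by
  refine ⟨?_, ?_⟩
  · simpa [expReward_const] using expReward_mono θ fun a => (hr a).1
  · simpa [expReward_const] using expReward_mono θ fun a => (hr a).2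

lemma hasDerivAt_softmax_add_smul (θ d : Fin K → ℝ) (a : Fin K) (s : ℝ) :
    HasDerivAt (fun s : ℝ => softmax (θ + s • d) a)
      (softmax (θ + s • d) a * (d a - expReward d (θ + s • d))) s := by
  have hexp (b : Fin K) :
      HasDerivAt (fun s : ℝ => exp ((θ + s • d) b)) (exp ((θ + s • d) b) * d b) s := by
    simpa using (((hasDerivAt_id s).mul_const (d b)).const_add (θ b)).exp
  refine ((hexp a).fun_div (HasDerivAt.fun_sum fun b _ => hexp b)
    (sum_exp_pos _).ne').congr_deriv ?_
  simp only [softmax, expReward, div_mul_eq_mul_div, ← sum_div]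
  field_simp

lemma hasDerivAt_expReward_add_smul (h θ d : Fin K → ℝ) (s : ℝ) :
    HasDerivAt (fun s : ℝ => expReward h (θ + s • d))
      (expReward (d * h) (θ + s • d) - expReward d (θ + s • d) * expReward h (θ + s • d)) s := by
  refine (HasDerivAt.fun_sum fun a _ =>
    (hasDerivAt_softmax_add_smul θ d a s).mul_const (h a)).congr_deriv ?_
  generalize expReward d (θ + s • d) = m
  simp only [expReward, mul_sum, ← sum_sub_distrib, Pi.mul_apply]
  exact sum_congr rfl fun a _ => by ring

lemma expReward_sub_sq (d θ : Fin K → ℝ) (m : ℝ) :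
    expReward (fun a => (d a - m) ^ 2) θ = expReward (d * d) θ - 2 * m * expReward d θ + m ^ 2 := by
  conv_rhs => rw [← expReward_const (m ^ 2) θ]
  simp only [expReward, Pi.mul_apply, mul_sum, ← sum_sub_distrib, ← sum_add_distrib]
  exact sum_congr rfl fun a _ => by ring

lemma expReward_sub_sq_mul_sub (d r θ : Fin K → ℝ) (m e : ℝ) :
    expReward (fun a => (d a - m) ^ 2 * (r a - e)) θ =
      expReward (d * (d * r)) θ - 2 * m * expReward (d * r) θ + m ^ 2 * expReward r θ
        - e * expReward (d * d) θ + 2 * m * e * expReward d θ - m ^ 2 * e := by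
  conv_rhs => rw [← expReward_const (m ^ 2 * e) θ]
  simp only [expReward, Pi.mul_apply, mul_sum, ← sum_sub_distrib, ← sum_add_distrib]
  exact sum_congr rfl fun a _ => by ring

lemma hasDerivAt_covariance_add_smul (r θ d : Fin K → ℝ) (s : ℝ) :
    HasDerivAt
      (fun s : ℝ =>
        expReward (d * r) (θ + s • d) - expReward d (θ + s • d) * expReward r (θ + s • d))
      (expReward (fun a => (d a - expReward d (θ + s • d)) ^ 2 * (r a - expReward r (θ + s • d)))
        (θ + s • d)) s :=
  ((hasDerivAt_expReward_add_smul (d * r) θ d s).sub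
    ((hasDerivAt_expReward_add_smul d θ d s).mul
      (hasDerivAt_expReward_add_smul r θ d s))).congr_deriv
    (by rw [expReward_sub_sq_mul_sub]; ring)

lemma abs_expReward_sub_sq_mul_sub_le {r : Fin K → ℝ} (hr : ∀ a, r a ∈ Set.Icc 0 1)
    (d θ : Fin K → ℝ) :
    |expReward (fun a => (d a - expReward d θ) ^ 2 * (r a - expReward r θ)) θ| ≤ ∑ a, d a ^ 2 := by
  obtain ⟨he0, he1⟩ := expReward_mem_Icc hr θ
  calc |expReward (fun a => (d a - expReward d θ) ^ 2 * (r a - expReward r θ)) θ|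
      ≤ expReward (fun a => (d a - expReward d θ) ^ 2) θ := by
        refine (abs_sum_le_sum_abs _ _).trans (sum_le_sum fun a _ => ?_)
        have hra : |r a - expReward r θ| ≤ 1 :=
          abs_sub_le_iff.2 ⟨by linarith [(hr a).2], by linarith [(hr a).1]⟩
        rw [abs_mul, abs_mul, abs_of_pos (softmax_pos θ a), abs_sq]
        exact mul_le_mul_of_nonneg_left (mul_le_of_le_one_right (sq_nonneg _) hra)
          (softmax_pos θ a).le
    _ = expReward (d * d) θ - expReward d θ ^ 2 := by rw [expReward_sub_sq]; ring
    _ ≤ expReward (d * d) θ := sub_le_self _ (sq_nonneg _)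
    _ ≤ ∑ a, d a ^ 2 := sum_le_sum fun a _ => by
        rw [Pi.mul_apply, ← sq]
        exact mul_le_of_le_one_left (sq_nonneg _) (softmax_le_one θ a)

lemma expReward_add_ge {r : Fin K → ℝ} (hr : ∀ a, r a ∈ Set.Icc 0 1) (θ d : Fin K → ℝ) :
    expReward r θ + ∑ a, pgrad r θ a * d a - (∑ a, d a ^ 2) / 2 ≤ expReward r (θ + d) := by
  have h := add_deriv_sub_half_le_of_neg_le_deriv2 (hasDerivAt_expReward_add_smul r θ d)
    (hasDerivAt_covariance_add_smul r θ d)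
    (fun s => neg_le_of_abs_le (abs_expReward_sub_sq_mul_sub_le hr d _))
  simpa [sum_pgrad_mul] using h

lemma expReward_add_smul_pgrad_ge {r : Fin K → ℝ} (hr : ∀ a, r a ∈ Set.Icc 0 1)
    (θ : Fin K → ℝ) (η : ℝ) :
    expReward r θ + η * (1 - η / 2) * ∑ a, pgrad r θ a ^ 2 ≤
      expReward r (θ + η • pgrad r θ) := by
  convert expReward_add_ge hr θ (η • pgrad r θ) using 1
  simp only [Pi.smul_apply, smul_eq_mul, mul_pow, ← mul_sum, mul_left_comm _ η, ← sq]
  ring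

lemma sub_expReward_add_smul_pgrad_le {r : Fin K → ℝ} (hr : ∀ a, r a ∈ Set.Icc 0 1)
    (astar : Fin K) (θ : Fin K → ℝ) :
    r astar - expReward r (θ + (2 / 5 : ℝ) • pgrad r θ) ≤
      r astar - expReward r θ - (softmax θ astar * (r astar - expReward r θ)) ^ 2 / 5 := by
  have hstep := expReward_add_smul_pgrad_ge hr θ (2 / 5)
  have hstar : (softmax θ astar * (r astar - expReward r θ)) ^ 2 ≤ ∑ a, pgrad r θ a ^ 2 :=
    single_le_sum (f := fun a => pgrad r θ a ^ 2) (fun a _ => sq_nonneg _) (mem_univ astar)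
  linarith [sq_nonneg (softmax θ astar * (r astar - expReward r θ))]

lemma sub_expReward_le_of_le_softmax {r : Fin K → ℝ} (hr : ∀ a, r a ∈ Set.Icc 0 1)
    {astar : Fin K} {θ : ℕ → Fin K → ℝ}
    (hupd : ∀ t, θ (t + 1) = θ t + (2 / 5 : ℝ) • pgrad r (θ t))
    {c : ℝ} (hc0 : 0 < c) (hc : ∀ t, c ≤ softmax (θ t) astar) (t : ℕ) :
    r astar - expReward r (θ t) ≤ 5 / (c ^ 2 * (t + 1)) := by
  have hc1 : c ≤ 1 := (hc 0).trans (softmax_le_one _ _)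
  have hgap0 : r astar - expReward r (θ 0) ≤ 5 / c ^ 2 := by
    rw [le_div_iff₀ (by positivity)]
    nlinarith [(hr astar).2, (expReward_mem_Icc hr (θ 0)).1]
  refine (le_div_succ_of_le_sub_sq_div (x := fun t => r astar - expReward r (θ t))
    (by positivity) hgap0 (fun t => ?_) t).trans_eq (div_div _ _ _)
  have hsq : (c * (r astar - expReward r (θ t))) ^ 2 ≤
      (softmax (θ t) astar * (r astar - expReward r (θ t))) ^ 2 := by
    rw [mul_pow, mul_pow]
    gcongr
    exact hc t
  have hstep := sub_expReward_add_smul_pgrad_le hr astar (θ t)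
  rw [← hupd t] at hstep
  calc r astar - expReward r (θ (t + 1))
      ≤ r astar - expReward r (θ t) - (c * (r astar - expReward r (θ t))) ^ 2 / 5 := by linarith
    _ = r astar - expReward r (θ t) - (r astar - expReward r (θ t)) ^ 2 / (5 / c ^ 2) := by
      field_simp

lemma pgrad_le_pgrad {r θ : Fin K → ℝ} {a b : Fin K} (hr : ∀ a, r a ≤ r b) (hθ : θ a ≤ θ b) :
    pgrad r θ a ≤ pgrad r θ b := by
  have hgap : 0 ≤ r b - expReward r θ := by
    simpa [expReward_const] using expReward_mono θ hr
  rcases le_or_gt (r a) (expReward r θ) with ha | ha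
  · exact (mul_nonpos_of_nonneg_of_nonpos (softmax_pos θ a).le (by linarith)).trans
      (mul_nonneg (softmax_pos θ b).le hgap)
  · exact mul_le_mul (softmax_le_softmax_iff.2 hθ) (by linarith [hr a]) (by linarith)
      (softmax_pos θ b).le

lemma softmax_le_softmax_succ {r : Fin K → ℝ} {astar : Fin K} (hr : ∀ a, r a ≤ r astar)
    {θ : ℕ → Fin K → ℝ} {η : ℝ} (hη : 0 ≤ η) (hupd : ∀ t, θ (t + 1) = θ t + η • pgrad r (θ t))
    (h0 : ∀ a, θ 0 a ≤ θ 0 astar) (t : ℕ) :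
    softmax (θ t) astar ≤ softmax (θ (t + 1)) astar := by
  have hgap (t : ℕ) (hθ : ∀ a, θ t a ≤ θ t astar) (a : Fin K) :
      θ (t + 1) a - θ (t + 1) astar ≤ θ t a - θ t astar := by
    have := mul_le_mul_of_nonneg_left (pgrad_le_pgrad hr (hθ a)) hη
    simp only [hupd t, Pi.add_apply, Pi.smul_apply, smul_eq_mul]
    linarith
  have hmax (t : ℕ) : ∀ a, θ t a ≤ θ t astar := by
    induction t with
    | zero => exact h0
    | succ t ih => exact fun a => by linarith [hgap t ih a, ih a]
  exact softmax_le_softmax_of_sub_le (hgap t (hmax t))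

end

/-- Here `θ 0` is the paper's `θ_1`, so the paper's `θ_t` is `θ (t-1)` and the
rate `5/(c²·t)` becomes `5/(c²·(t+1))`. -/
theorem softmax_pg_true_gradient_upper_bound
    {K : ℕ} (hK : 2 ≤ K) (r : Fin K → ℝ)
    (hr : ∀ a, 0 < r a ∧ r a ≤ 1)
    (astar : Fin K) (hstar : ∀ a, a ≠ astar → r a < r astar)
    (θ : ℕ → Fin K → ℝ)
    (hupd : ∀ t, θ (t + 1) = fun a => θ t a + (2 / 5) * pgrad r (θ t) a)
    (c : ℝ) (hc : c = ⨅ t : ℕ, softmax (θ t) astar) :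
    (0 < c →
      ∀ t : ℕ, r astar - expReward r (θ t) ≤ 5 / (c ^ 2 * ((t : ℝ) + 1))) ∧
    ((∀ a, softmax (θ 0) a = 1 / K) →
      (∀ t, softmax (θ t) astar ≤ softmax (θ (t + 1)) astar) ∧
      1 / (K : ℝ) ≤ c ∧
      ∀ t : ℕ, r astar - expReward r (θ t) ≤ 5 * (K : ℝ) ^ 2 / ((t : ℝ) + 1)) := by
  have : NeZero K := ⟨by omega⟩
  have hr' : ∀ a, r a ∈ Set.Icc 0 1 := fun a => ⟨(hr a).1.le, (hr a).2⟩
  have hupd' : ∀ t, θ (t + 1) = θ t + (2 / 5 : ℝ) • pgrad r (θ t) := hupd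
  have hle : ∀ a, r a ≤ r astar := fun a =>
    if h : a = astar then h ▸ le_rfl else (hstar a h).le
  have hc_le (t : ℕ) : c ≤ softmax (θ t) astar :=
    hc ▸ ciInf_le ⟨0, Set.forall_mem_range.2 fun t => (softmax_pos _ _).le⟩ t
  have hrate (hc0 : 0 < c) := sub_expReward_le_of_le_softmax hr' hupd' hc0 hc_le
  refine ⟨hrate, fun huni => ?_⟩
  have hmono := softmax_le_softmax_succ hle (by norm_num) hupd'
    (fun a => softmax_le_softmax_iff.1 (by rw [huni, huni]))
  have hcK : 1 / (K : ℝ) ≤ c :=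
    hc ▸ le_ciInf fun t => huni astar ▸ monotone_nat_of_le_succ hmono (Nat.zero_le t)
  refine ⟨hmono, hcK, fun t => (hrate (lt_of_lt_of_le (by positivity) hcK) t).trans ?_⟩
  calc 5 / (c ^ 2 * ((t : ℝ) + 1)) ≤ 5 / ((1 / K) ^ 2 * (t + 1)) := by gcongr
    _ = 5 * (K : ℝ) ^ 2 / (t + 1) := by field_simp
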